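/- Suppose a(t) ≥ 0 and c(t) ≤ 0 on [t₀,∞) (a, b, c continuous). If x₀ solves x' + a(t)x² + b(t)x + c(t) = 0 on [t₀,∞) with x₀(t₀) = 0 and c is not identically zero on any interval [t₀,∞), then x₀(t) ≥ 0 for all t ≥ t₀. -/

import Mathlib

open Set Real

/-!
Rewriting the equation as the linear equation `x' = -(a x₀ + b) x - c` with a known coefficient,
the integrating factor `exp (∫ (a x₀ + b))` turns it into `(x₀ e^{∫ (a x₀ + b)})' = -c e^{∫ (a x₀ + b)} ≥ 0`,
so this product is nondecreasing and starts at `0`.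
-/

lemma exists_hasDerivAt_of_continuousOn_Ici {p : ℝ → ℝ} {t₀ : ℝ} (hp : ContinuousOn p (Ici t₀)) :
    ∃ P : ℝ → ℝ, ∀ t ≥ t₀, HasDerivAt P (p t) t := by
  -- `p ∘ max · t₀` is continuous on all of `ℝ` and agrees with `p` on `[t₀, ∞)`.
  set q : ℝ → ℝ := fun t => p (max t t₀)
  have hq : Continuous q :=
    hp.comp_continuous (continuous_id.max continuous_const) fun t => le_max_right t t₀
  refine ⟨fun t => ∫ s in t₀..t, q s, fun t ht => ?_⟩
  have hqt : q t = p t := by simp only [q, max_eq_left ht]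
  exact hqt ▸ intervalIntegral.integral_hasDerivAt_right (hq.intervalIntegrable t₀ t)
    (hq.stronglyMeasurableAtFilter _ _) hq.continuousAt

theorem nonneg_of_hasDerivAt_eq_neg_mul_add {x p r : ℝ → ℝ} {t₀ : ℝ}
    (hp : ContinuousOn p (Ici t₀)) (hr : ∀ t ≥ t₀, 0 ≤ r t)
    (hx : ∀ t ≥ t₀, HasDerivAt x (-(p t * x t) + r t) t) (hx₀ : 0 ≤ x t₀) :
    ∀ t ≥ t₀, 0 ≤ x t := by
  obtain ⟨P, hP⟩ := exists_hasDerivAt_of_continuousOn_Ici hp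
  set u : ℝ → ℝ := fun t => x t * exp (P t)
  have hu : ∀ t ≥ t₀, HasDerivAt u (r t * exp (P t)) t := fun t ht =>
    ((hx t ht).mul (hP t ht).exp).congr_deriv (by ring)
  have hmono : MonotoneOn u (Ici t₀) := by
    refine monotoneOn_of_hasDerivWithinAt_nonneg (convex_Ici t₀)
      (fun t ht => (hu t ht).continuousAt.continuousWithinAt)
      (fun t ht => (hu t (interior_subset ht)).hasDerivWithinAt)
      (fun t ht => ?_)
    exact mul_nonneg (hr t (interior_subset ht)) (exp_pos _).le
  intro t ht
  have hut : 0 ≤ u t :=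
    (mul_nonneg hx₀ (exp_pos _).le).trans (hmono self_mem_Ici ht ht)
  exact nonneg_of_mul_nonneg_left hut (exp_pos _)

theorem stmt3_general (t₀ : ℝ) (a b c x₀ : ℝ → ℝ)
    (ha : ContinuousOn a (Ici t₀)) (hb : ContinuousOn b (Ici t₀))
    (hc0 : ∀ t ≥ t₀, c t ≤ 0)
    (hx : ∀ t ≥ t₀, HasDerivAt x₀ (-(a t * x₀ t ^ 2 + b t * x₀ t + c t)) t)
    (hx0 : x₀ t₀ = 0) :
    ∀ t ≥ t₀, 0 ≤ x₀ t := by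
  have hx₀ : ContinuousOn x₀ (Ici t₀) := fun t ht => (hx t ht).continuousAt.continuousWithinAt
  refine nonneg_of_hasDerivAt_eq_neg_mul_add (p := fun t => a t * x₀ t + b t) (r := fun t => -c t)
    ((ha.mul hx₀).add hb) (fun t ht => neg_nonneg.mpr (hc0 t ht))
    (fun t ht => (hx t ht).congr_deriv (by ring)) hx0.ge

theorem stmt3 (t₀ : ℝ) (a b c x₀ : ℝ → ℝ)
    (ha : ContinuousOn a (Ici t₀)) (hb : ContinuousOn b (Ici t₀))
    (hc : ContinuousOn c (Ici t₀))
    (ha0 : ∀ t ≥ t₀, 0 ≤ a t) (hc0 : ∀ t ≥ t₀, c t ≤ 0)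
    (hx : ∀ t ≥ t₀, HasDerivAt x₀ (-(a t * x₀ t ^ 2 + b t * x₀ t + c t)) t)
    (hx0 : x₀ t₀ = 0)
    (hcne : ∀ t₁ ≥ t₀, ∃ s ≥ t₁, c s ≠ 0) :
    ∀ t ≥ t₀, 0 ≤ x₀ t :=
  stmt3_general t₀ a b c x₀ ha hb hc0 hx hx0
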